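/- Let R be a ring with an exhaustive Γ-separated filtration FR such that G_F(R) is a domain and R is a division ring. Then F_0R is a valuation ring of R: it is invariant under all inner automorphisms of R, and for every nonzero x ∈ R either x ∈ F_0R or x^{-1} ∈ F_0R. Moreover F_{<0}R is its unique maximal (two-sided) ideal. -/

import Mathlib

/-!
Since `G_F(R)` is a domain, every nonzero `a` has a well-defined degree `γ` (the level at which
its principal symbol lives), and degrees add under multiplication. Hence `1` has degree `0` and
`x⁻¹` has degree `-deg x`. Conjugation by `u` multiplies by elements of `F_{deg u}R` and
`F_{-deg u}R`, so it preserves `F_0R`; of `x` and `x⁻¹` one has degree `≤ 0`; and an element of `F_0R \ F_{<0}R` has degree `0`, so its inverse lies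
in `F_0R` too.
-/

/-- `F_{<γ}R = Σ_{γ' < γ} F_{γ'}R`. -/
def fbelow {R : Type*} [Ring R] {Γ : Type*} [AddCommGroup Γ] [LinearOrder Γ] [IsOrderedAddMonoid Γ]
    (F : Γ → AddSubgroup R) (γ : Γ) : AddSubgroup R :=
  ⨆ γ' ∈ Set.Iio γ, F γ'

section Filtration

variable {Γ : Type*} [AddCommGroup Γ] [LinearOrder Γ] [IsOrderedAddMonoid Γ]

section Ring

variable {R : Type*} [Ring R] {F : Γ → AddSubgroup R} {γ δ : Γ} {a b : R}

/-- `a` has degree `γ`: its principal symbol is a nonzero element of `F_γR / F_{<γ}R`. -/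
def HasDegree (F : Γ → AddSubgroup R) (a : R) (γ : Γ) : Prop :=
  a ∈ F γ ∧ a ∉ fbelow F γ

theorem mem_fbelow_of_lt (h : δ < γ) (ha : a ∈ F δ) : a ∈ fbelow F γ :=
  (le_biSup F h : F δ ≤ fbelow F γ) ha

theorem fbelow_le (hmono : Monotone F) : fbelow F γ ≤ F γ :=
  iSup₂_le fun _ h => hmono h.le

theorem mul_mem_fbelow_of_mem_fbelow_left
    (hmul : ∀ {γ δ : Γ} {a b : R}, a ∈ F γ → b ∈ F δ → a * b ∈ F (γ + δ))
    (ha : a ∈ fbelow F γ) (hb : b ∈ F δ) : a * b ∈ fbelow F (γ + δ) := by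
  suffices fbelow F γ ≤ (fbelow F (γ + δ)).comap (AddMonoidHom.mulRight b) from this ha
  exact iSup₂_le fun γ' hγ' _ hx =>
    mem_fbelow_of_lt (add_lt_add_left (Set.mem_Iio.mp hγ') δ) (hmul hx hb)

theorem mul_mem_fbelow_of_mem_fbelow_right
    (hmul : ∀ {γ δ : Γ} {a b : R}, a ∈ F γ → b ∈ F δ → a * b ∈ F (γ + δ))
    (ha : a ∈ F γ) (hb : b ∈ fbelow F δ) : a * b ∈ fbelow F (γ + δ) := by
  suffices fbelow F δ ≤ (fbelow F (γ + δ)).comap (AddMonoidHom.mulLeft a) from this hb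
  exact iSup₂_le fun δ' hδ' _ hx =>
    mem_fbelow_of_lt (add_lt_add_right (Set.mem_Iio.mp hδ') γ) (hmul ha hx)

namespace HasDegree

theorem le_of_mem (ha : HasDegree F a γ) (hδ : a ∈ F δ) : γ ≤ δ :=
  not_lt.mp fun h => ha.2 (mem_fbelow_of_lt h hδ)

theorem unique (ha : HasDegree F a γ) (ha' : HasDegree F a δ) : γ = δ :=
  (ha.le_of_mem ha'.1).antisymm (ha'.le_of_mem ha.1)

theorem mul (hmul : ∀ {γ δ : Γ} {a b : R}, a ∈ F γ → b ∈ F δ → a * b ∈ F (γ + δ))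
    (hdom : ∀ {γ δ : Γ} {a b : R}, a ∈ F γ → a ∉ fbelow F γ →
      b ∈ F δ → b ∉ fbelow F δ → a * b ∉ fbelow F (γ + δ))
    (ha : HasDegree F a γ) (hb : HasDegree F b δ) : HasDegree F (a * b) (γ + δ) :=
  ⟨hmul ha.1 hb.1, hdom ha.1 ha.2 hb.1 hb.2⟩

end HasDegree

theorem hasDegree_one [Nontrivial R]
    (hmul : ∀ {γ δ : Γ} {a b : R}, a ∈ F γ → b ∈ F δ → a * b ∈ F (γ + δ))
    (hsep : ∀ a : R, a ≠ 0 → ∃ γ, HasDegree F a γ)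
    (hdom : ∀ {γ δ : Γ} {a b : R}, a ∈ F γ → a ∉ fbelow F γ →
      b ∈ F δ → b ∉ fbelow F δ → a * b ∉ fbelow F (γ + δ)) :
    HasDegree F (1 : R) 0 := by
  obtain ⟨γ, h1⟩ := hsep 1 one_ne_zero
  have h11 : HasDegree F (1 : R) (γ + γ) := by
    simpa only [mul_one] using HasDegree.mul hmul hdom h1 h1
  have hγ : γ = 0 := by simpa using h11.unique h1
  exact hγ ▸ h1

end Ring

theorem HasDegree.inv {R : Type*} [DivisionRing R] {F : Γ → AddSubgroup R} {γ : Γ} {x : R}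
    (hmul : ∀ {γ δ : Γ} {a b : R}, a ∈ F γ → b ∈ F δ → a * b ∈ F (γ + δ))
    (hsep : ∀ a : R, a ≠ 0 → ∃ γ, HasDegree F a γ)
    (hdom : ∀ {γ δ : Γ} {a b : R}, a ∈ F γ → a ∉ fbelow F γ →
      b ∈ F δ → b ∉ fbelow F δ → a * b ∉ fbelow F (γ + δ))
    (hx : HasDegree F x γ) : HasDegree F x⁻¹ (-γ) := by
  have hx0 : x ≠ 0 := by
    rintro rfl
    exact hx.2 (zero_mem _)
  obtain ⟨δ, hδ⟩ := hsep x⁻¹ (inv_ne_zero hx0)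
  have hγδ : HasDegree F (1 : R) (γ + δ) := by
    simpa only [mul_inv_cancel₀ hx0] using HasDegree.mul hmul hdom hx hδ
  have : γ + δ = 0 := hγδ.unique (hasDegree_one hmul hsep hdom)
  rwa [neg_eq_of_add_eq_zero_right this]

end Filtration

theorem stmt8_general {R : Type*} [DivisionRing R] {Γ : Type*} [AddCommGroup Γ] [LinearOrder Γ] [IsOrderedAddMonoid Γ]
    (F : Γ → AddSubgroup R)
    (hmono : Monotone F)
    (hmul : ∀ {γ δ : Γ} {a b : R}, a ∈ F γ → b ∈ F δ → a * b ∈ F (γ + δ))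
    (hsep : ∀ a : R, a ≠ 0 → ∃ γ : Γ, a ∈ F γ ∧ a ∉ fbelow F γ)
    (hdom : ∀ {γ δ : Γ} {a b : R}, a ∈ F γ → a ∉ fbelow F γ →
      b ∈ F δ → b ∉ fbelow F δ → a * b ∉ fbelow F (γ + δ)) :
    (∀ u x : R, u ≠ 0 → x ∈ F 0 → u * x * u⁻¹ ∈ F 0) ∧
    (∀ x : R, x ≠ 0 → x ∈ F 0 ∨ x⁻¹ ∈ F 0) ∧
    (fbelow F 0 ≤ F 0) ∧
    (∀ x ∈ fbelow F 0, ∀ y ∈ F 0, x * y ∈ fbelow F 0 ∧ y * x ∈ fbelow F 0) ∧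
    ((1 : R) ∉ fbelow F 0) ∧
    (∀ x ∈ F 0, x ∉ fbelow F 0 → ∃ y ∈ F 0, x * y = 1 ∧ y * x = 1) := by
  refine ⟨fun u x hu hx => ?_, fun x hx => ?_, fbelow_le hmono,
    fun x hx y hy => ?_, (hasDegree_one hmul hsep hdom).2, fun x hx hx' => ?_⟩
  · obtain ⟨δ, hδ⟩ : ∃ δ, HasDegree F u δ := hsep u hu
    have hconj := hmul (hmul hδ.1 hx) (hδ.inv hmul hsep hdom).1
    rwa [add_zero, add_neg_cancel] at hconj
  · obtain ⟨γ, hγ⟩ : ∃ γ, HasDegree F x γ := hsep x hx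
    rcases le_total γ 0 with h | h
    · exact .inl (hmono h hγ.1)
    · exact .inr (hmono (neg_nonpos.mpr h) (hγ.inv hmul hsep hdom).1)
  · exact ⟨add_zero (0 : Γ) ▸ mul_mem_fbelow_of_mem_fbelow_left hmul hx hy,
      add_zero (0 : Γ) ▸ mul_mem_fbelow_of_mem_fbelow_right hmul hy hx⟩
  · have hx0 : x ≠ 0 := fun h => hx' (h ▸ zero_mem _)
    have hinv := (HasDegree.inv (γ := 0) hmul hsep hdom ⟨hx, hx'⟩).1
    exact ⟨x⁻¹, neg_zero (G := Γ) ▸ hinv, mul_inv_cancel₀ hx0, inv_mul_cancel₀ hx0⟩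

/-- If `R` is a division ring with an exhaustive `Γ`-separated filtration such that
`G_F(R)` is a domain, then `F_0R` is a (non-commutative) valuation ring of `R`: it is
invariant under inner automorphisms and for `x ≠ 0` either `x ∈ F_0R` or `x⁻¹ ∈ F_0R`;
moreover `F_{<0}R` is a proper two-sided ideal of `F_0R` whose complement in `F_0R`
consists of units of `F_0R`, i.e. it is the unique maximal ideal of `F_0R`. -/
theorem stmt8 {R : Type*} [DivisionRing R] {Γ : Type*} [AddCommGroup Γ] [LinearOrder Γ] [IsOrderedAddMonoid Γ]
    (F : Γ → AddSubgroup R)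
    (hmono : Monotone F)
    (hmul : ∀ {γ δ : Γ} {a b : R}, a ∈ F γ → b ∈ F δ → a * b ∈ F (γ + δ))
    (hone : (1 : R) ∈ F 0)
    (hexh : ∀ a : R, ∃ γ : Γ, a ∈ F γ)
    (hsep : ∀ a : R, a ≠ 0 → ∃ γ : Γ, a ∈ F γ ∧ a ∉ fbelow F γ)
    (hdom : ∀ {γ δ : Γ} {a b : R}, a ∈ F γ → a ∉ fbelow F γ →
      b ∈ F δ → b ∉ fbelow F δ → a * b ∉ fbelow F (γ + δ)) :
    (∀ u x : R, u ≠ 0 → x ∈ F 0 → u * x * u⁻¹ ∈ F 0) ∧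
    (∀ x : R, x ≠ 0 → x ∈ F 0 ∨ x⁻¹ ∈ F 0) ∧
    (fbelow F 0 ≤ F 0) ∧
    (∀ x ∈ fbelow F 0, ∀ y ∈ F 0, x * y ∈ fbelow F 0 ∧ y * x ∈ fbelow F 0) ∧
    ((1 : R) ∉ fbelow F 0) ∧
    (∀ x ∈ F 0, x ∉ fbelow F 0 → ∃ y ∈ F 0, x * y = 1 ∧ y * x = 1) :=
  stmt8_general F hmono hmul hsep hdom
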